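/- Suppose each branch's choice function C^b satisfies IRC and substitutability and agents have strict preferences over their own contracts plus an outside option. Then the outcome of the cumulative offer process is independent of the order in which agents are chosen to propose. -/

import Mathlib

open Finset
variable {I B X : Type*} [DecidableEq I] [DecidableEq B] [DecidableEq X] [Fintype X]

/-- Contracts currently held by the branches: from the cumulative offer set `A`,
each branch holds its choice from the offers addressed to it. -/
noncomputable def held (br : X → B) (C : B → Finset X → Finset X) (A : Finset X) : Finset X :=
  A.filter (fun x => x ∈ C (br x) (A.filter (fun y => br y = br x)))

/-- Agent `i` has no currently held contract. -/
noncomputable def FreeAgent (ag : X → I) (br : X → B) (C : B → Finset X → Finset X)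
    (A : Finset X) (i : I) : Prop :=
  ∀ x ∈ held br C A, ag x ≠ i

/-- Contract `x` is a valid next proposal at cumulative offer set `A`: its agent is
free, `x` is acceptable, not yet proposed, and most preferred among the agent's
acceptable not-yet-proposed contracts (`none` is the outside option; higher
`P`-value = more preferred). -/
noncomputable def Proposable (ag : X → I) (br : X → B) (C : B → Finset X → Finset X)
    (P : I → Option X → ℕ) (A : Finset X) (x : X) : Prop :=
  x ∉ A ∧ P (ag x) none < P (ag x) (some x) ∧ FreeAgent ag br C A (ag x) ∧
    ∀ y : X, ag y = ag x → y ∉ A → P (ag y) none < P (ag y) (some y) →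
      P (ag x) (some y) ≤ P (ag x) (some x)

/-- A policy resolving the arbitrary choice of proposer: it returns a valid proposal
whenever one exists, and `none` exactly when no agent can propose. -/
noncomputable def ValidPolicy (ag : X → I) (br : X → B) (C : B → Finset X → Finset X)
    (P : I → Option X → ℕ) (pol : Finset X → Option X) : Prop :=
  ∀ A : Finset X, (∀ x, pol A = some x → Proposable ag br C P A x) ∧
    (pol A = none → ∀ x, ¬ Proposable ag br C P A x)

/-- The cumulative offer process: starting from offer set `A`, repeatedly add the
proposal chosen by the policy (fuel-indexed; `Fintype.card X + 1` steps suffice). -/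
noncomputable def cop (pol : Finset X → Option X) : ℕ → Finset X → Finset X
  | 0, A => A
  | n + 1, A =>
    match pol A with
    | none => A
    | some x => cop pol n (insert x A)

/-- The outcome of the cumulative offer process. -/
noncomputable def outcome (br : X → B) (C : B → Finset X → Finset X)
    (pol : Finset X → Option X) : Finset X :=
  held br C (cop pol (Fintype.card X + 1) ∅)

/-- Irrelevance of rejected contracts. -/
def IRCb (Cb : Finset X → Finset X) : Prop :=
  ∀ (Y : Finset X) (z : X), z ∉ Y → z ∉ Cb (insert z Y) → Cb Y = Cb (insert z Y)

/-- Substitutability. -/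
def Substb (Cb : Finset X → Finset X) : Prop :=
  ∀ (Y : Finset X) (z z' : X), z ∉ Cb (insert z Y) → z ∉ Cb (insert z' (insert z Y))

/-- Law of aggregate demand. -/
def LADb (Cb : Finset X → Finset X) : Prop :=
  ∀ Y Y' : Finset X, Y ⊆ Y' → (Cb Y).card ≤ (Cb Y').card


/-!
Substitutability means that an offer rejected by a branch stays rejected as further offers
arrive, so an agent who holds no contract stays free until she proposes again. Hence two
different valid proposals at the same offer set commute: each remains valid after the other
is made, and both orders reach the same offer set. This one-step diamond property makes the
proposal relation confluent (Church–Rosser), and since every run of the process ends in an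
offer set at which nobody can propose, all runs end in the same offer set.
-/

namespace Relation

variable {α : Type*} {r : α → α → Prop}

theorem ReflTransGen.eq_of_forall_not {a b : α} (hab : ReflTransGen r a b)
    (ha : ∀ c, ¬ r a c) : b = a := by
  rcases hab.cases_head with rfl | ⟨c, hac, -⟩
  · rfl
  · exact absurd hac (ha c)

theorem eq_of_church_rosser_of_forall_not
    (h : ∀ a b c, r a b → r a c → ∃ d, ReflGen r b d ∧ ReflTransGen r c d) {a b c : α}
    (hab : ReflTransGen r a b) (hac : ReflTransGen r a c)
    (hb : ∀ d, ¬ r b d) (hc : ∀ d, ¬ r c d) : b = c := by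
  obtain ⟨d, hbd, hcd⟩ := church_rosser h hab hac
  rw [← hbd.eq_of_forall_not hb, hcd.eq_of_forall_not hc]

end Relation

omit [Fintype X] in
theorem Substb.notMem_insert {Cb : Finset X → Finset X} (hs : Substb Cb) {Y : Finset X}
    {x : X} (z : X) (hx : x ∈ Y) (hrej : x ∉ Cb Y) : x ∉ Cb (insert z Y) := by
  rw [← insert_erase hx] at hrej ⊢
  exact hs _ x z hrej

omit [Fintype X] in
theorem Substb.notMem_of_subset {Cb : Finset X → Finset X} (hs : Substb Cb) {S T : Finset X}
    {x : X} (hST : S ⊆ T) (hx : x ∈ S) (hrej : x ∉ Cb S) : x ∉ Cb T := by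
  suffices ∀ D : Finset X, x ∉ Cb (S ∪ D) by simpa [union_sdiff_of_subset hST] using this (T \ S)
  intro D
  induction D using Finset.induction_on with
  | empty => simpa using hrej
  | insert z D _ ih =>
    rw [union_insert]
    exact hs.notMem_insert z (mem_union_left D hx) ih

section Proposals

variable {ag : X → I} {br : X → B} {C : B → Finset X → Finset X} {P : I → Option X → ℕ}

omit [DecidableEq I] [Fintype X] in
theorem FreeAgent.insert (hsub : ∀ b, Substb (C b)) {A : Finset X} {i : I}
    (hi : FreeAgent ag br C A i) {x : X} (hx : ag x ≠ i) :
    FreeAgent ag br C (insert x A) i := by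
  intro z hz hzi
  obtain ⟨hzA, hzC⟩ := mem_filter.mp hz
  rcases mem_insert.mp hzA with rfl | hzA
  · exact hx hzi
  · by_cases hheld : z ∈ C (br z) (A.filter fun u => br u = br z)
    · exact hi z (mem_filter.mpr ⟨hzA, hheld⟩) hzi
    · exact (hsub (br z)).notMem_of_subset
        (filter_subset_filter (fun u => br u = br z) (subset_insert x A))
        (mem_filter.mpr ⟨hzA, rfl⟩) hheld hzC

omit [DecidableEq I] [Fintype X] in
theorem Proposable.eq_of_ag_eq (hP : ∀ i, Function.Injective (P i)) {A : Finset X}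
    {x y : X} (hx : Proposable ag br C P A x) (hy : Proposable ag br C P A y)
    (hxy : ag x = ag y) : x = y := by
  have hyx : P (ag x) (some y) ≤ P (ag x) (some x) := hx.2.2.2 y hxy.symm hy.1 hy.2.1
  have hxy' : P (ag x) (some x) ≤ P (ag x) (some y) := hxy ▸ hy.2.2.2 x hxy hx.1 hx.2.1
  exact Option.some_injective X (hP (ag x) (le_antisymm hxy' hyx))

omit [DecidableEq I] [Fintype X] in
theorem Proposable.insert (hsub : ∀ b, Substb (C b)) (hP : ∀ i, Function.Injective (P i))
    {A : Finset X} {x y : X} (hx : Proposable ag br C P A x) (hy : Proposable ag br C P A y)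
    (hxy : x ≠ y) : Proposable ag br C P (insert x A) y := by
  have hag : ag x ≠ ag y := fun h => hxy (hx.eq_of_ag_eq hP hy h)
  obtain ⟨hyA, hyacc, hyfree, hymax⟩ := hy
  refine ⟨?_, hyacc, hyfree.insert hsub hag, fun z hz hzA hzacc => ?_⟩
  · rw [mem_insert, not_or]
    exact ⟨Ne.symm hxy, hyA⟩
  · exact hymax z hz (fun h => hzA (mem_insert_of_mem h)) hzacc

variable (ag br C P) in
def OfferStep (A A' : Finset X) : Prop :=
  ∃ x, Proposable ag br C P A x ∧ A' = insert x A

omit [DecidableEq I] [Fintype X] in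
theorem offerStep_diamond (hsub : ∀ b, Substb (C b)) (hP : ∀ i, Function.Injective (P i))
    (A A₁ A₂ : Finset X) (h₁ : OfferStep ag br C P A A₁) (h₂ : OfferStep ag br C P A A₂) :
    ∃ D, Relation.ReflGen (OfferStep ag br C P) A₁ D ∧
      Relation.ReflTransGen (OfferStep ag br C P) A₂ D := by
  obtain ⟨x, hx, rfl⟩ := h₁
  obtain ⟨y, hy, rfl⟩ := h₂
  by_cases hxy : x = y
  · subst hxy
    exact ⟨_, .refl, .refl⟩
  refine ⟨insert y (insert x A), .single ⟨y, hx.insert hsub hP hy hxy, rfl⟩, .single ?_⟩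
  exact ⟨x, hy.insert hsub hP hx (Ne.symm hxy), insert_comm y x A⟩

omit [DecidableEq I] [Fintype X] in
theorem reflTransGen_offerStep_cop {pol : Finset X → Option X}
    (hpol : ValidPolicy ag br C P pol) (n : ℕ) (A : Finset X) :
    Relation.ReflTransGen (OfferStep ag br C P) A (cop pol n A) := by
  induction n generalizing A with
  | zero => exact .refl
  | succ n ih =>
    rcases hA : pol A with _ | x
    · simp only [cop, hA, Relation.ReflTransGen.refl]
    · simp only [cop, hA]
      exact .head ⟨x, (hpol A).1 x hA, rfl⟩ (ih _)

omit [DecidableEq I] in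
theorem not_proposable_cop {pol : Finset X → Option X} (hpol : ValidPolicy ag br C P pol)
    {n : ℕ} {A : Finset X} (hn : Fintype.card X < n + #A) (z : X) :
    ¬ Proposable ag br C P (cop pol n A) z := by
  induction n generalizing A with
  | zero => exact absurd (card_le_univ A) (by omega)
  | succ n ih =>
    rcases hA : pol A with _ | x
    · simpa only [cop, hA] using (hpol A).2 hA z
    · simp only [cop, hA]
      have hcard := card_insert_of_notMem ((hpol A).1 x hA).1
      exact ih (by omega)

end Proposals

theorem cop_order_independent_general (ag : X → I) (br : X → B) (C : B → Finset X → Finset X)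
    (P : I → Option X → ℕ)
    (hsub : ∀ b, Substb (C b))
    (hP : ∀ i, Function.Injective (P i))
    (pol₁ pol₂ : Finset X → Option X)
    (h₁ : ValidPolicy ag br C P pol₁) (h₂ : ValidPolicy ag br C P pol₂) :
    outcome br C pol₁ = outcome br C pol₂ := by
  have hfuel : Fintype.card X < Fintype.card X + 1 + #(∅ : Finset X) := by simp
  unfold outcome
  congr 1
  exact Relation.eq_of_church_rosser_of_forall_not (offerStep_diamond hsub hP)
    (reflTransGen_offerStep_cop h₁ _ ∅) (reflTransGen_offerStep_cop h₂ _ ∅)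
    (fun _ ⟨z, hz, _⟩ => not_proposable_cop h₁ hfuel z hz)
    (fun _ ⟨z, hz, _⟩ => not_proposable_cop h₂ hfuel z hz)

/-- Order independence of the cumulative offer process: with IRC and substitutable
branch choice rules, any two valid proposal orders yield the same outcome. -/
theorem cop_order_independent (ag : X → I) (br : X → B) (C : B → Finset X → Finset X)
    (P : I → Option X → ℕ)
    (hCb : ∀ b Y, C b Y ⊆ Y.filter (fun x => br x = b))
    (hfeas : ∀ b Y, ∀ x ∈ C b Y, ∀ y ∈ C b Y, ag x = ag y → x = y)
    (hirc : ∀ b, IRCb (C b)) (hsub : ∀ b, Substb (C b))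
    (hP : ∀ i, Function.Injective (P i))
    (pol₁ pol₂ : Finset X → Option X)
    (h₁ : ValidPolicy ag br C P pol₁) (h₂ : ValidPolicy ag br C P pol₂) :
    outcome br C pol₁ = outcome br C pol₂ :=
  cop_order_independent_general ag br C P hsub hP pol₁ pol₂ h₁ h₂
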